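/- arXiv:1612.01041 — 4 statements merged into one kernel-verified Lean document; each statement's English description precedes it below -/
import Mathlib

section
/- Let p ∈ (0,1), and let D_p be the distribution on pairs (A,B) of subsets of [n] where each i ∈ [n] is independently included in A with probability p and independently in B with probability p. For any functions f, g: 2^[n] → [n] satisfying f(A) ∈ A whenever A ≠ ∅ and g(B) ∈ B whenever B ≠ ∅, the probability over (A,B) ~ D_p that A and B are nonempty and f(A) = g(B) is at most p/(2-p). -/
/-!
Write `a i` for the probability that `A ≠ ∅` and `f A = i`, and `b i` likewise for `g`; the
agreement probability is `∑ a i * b i ≤ (∑ a i ^ 2 + ∑ b i ^ 2) / 2`. Since `f A ∈ A`, the mass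
`∑ i ∈ T, a i` is at most the probability that `A` meets `T`, which is
`1 - (1 - p) ^ #T = ∑ k < #T, p (1 - p) ^ k`. So the decreasing rearrangement of `a` has partial sums
dominated by those of the decreasing sequence `q k = p (1 - p) ^ k`, and two partial summations
give `∑ a ^ 2 ≤ ∑ q a ≤ ∑ q ^ 2 ≤ p ^ 2 / (1 - (1 - p) ^ 2) = p / (2 - p)`.
-/

open Finset

theorem exists_equiv_fin_antitone {ι α : Type*} [Fintype ι] [LinearOrder α] (a : ι → α) :
    ∃ σ : Fin (Fintype.card ι) ≃ ι, Antitone (a ∘ σ) := by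
  let e := (Fintype.equivFin ι).symm
  refine ⟨(Tuple.sort (OrderDual.toDual ∘ a ∘ e)).trans e, ?_⟩
  exact monotone_toDual_comp_iff.1 (Tuple.monotone_sort (OrderDual.toDual ∘ a ∘ e))

section PartialSummation

variable {R : Type*} [CommRing R] [LinearOrder R] [IsStrictOrderedRing R]

theorem sum_range_mul_le_sum_range_mul_of_sum_range_le {c d w : ℕ → R} {n : ℕ}
    (hw : Antitone w) (hwn : 0 ≤ w n)
    (hcd : ∀ k ≤ n, ∑ j ∈ range k, c j ≤ ∑ j ∈ range k, d j) :
    ∑ k ∈ range n, c k * w k ≤ ∑ k ∈ range n, d k * w k := by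
  set E : ℕ → R := fun m => ∑ k ∈ range m, (c k - d k) with hE
  have hE_nonpos : ∀ m ≤ n, E m ≤ 0 := fun m hm => by
    simp only [hE, sum_sub_distrib, sub_nonpos]; exact hcd m hm
  have defect : ∀ m ≤ n, ∑ k ∈ range m, (c k - d k) * w k ≤ E m * w m := by
    intro m
    induction m with
    | zero => simp [hE]
    | succ m ih =>
      intro hm
      calc ∑ k ∈ range (m + 1), (c k - d k) * w k
          ≤ E m * w m + (c m - d m) * w m := by
            rw [sum_range_succ]; exact add_le_add_left (ih (by omega)) _
        _ = E (m + 1) * w m := by simp only [hE, sum_range_succ]; ring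
        _ ≤ E (m + 1) * w (m + 1) :=
            mul_le_mul_of_nonpos_left (hw m.le_succ) (hE_nonpos _ hm)
  have := (defect n le_rfl).trans (mul_nonpos_of_nonpos_of_nonneg (hE_nonpos n le_rfl) hwn)
  simpa only [sub_mul, sum_sub_distrib, sub_nonpos] using this

theorem sum_range_sq_le_of_sum_range_le {b q : ℕ → R} {n : ℕ}
    (hb : Antitone b) (hbn : 0 ≤ b n) (hq : Antitone q) (hqn : 0 ≤ q n)
    (hbq : ∀ k ≤ n, ∑ j ∈ range k, b j ≤ ∑ j ∈ range k, q j) :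
    ∑ k ∈ range n, b k ^ 2 ≤ ∑ k ∈ range n, q k ^ 2 := by
  calc ∑ k ∈ range n, b k ^ 2 = ∑ k ∈ range n, b k * b k := by simp only [sq]
    _ ≤ ∑ k ∈ range n, q k * b k := sum_range_mul_le_sum_range_mul_of_sum_range_le hb hbn hbq
    _ = ∑ k ∈ range n, b k * q k := by simp only [mul_comm]
    _ ≤ ∑ k ∈ range n, q k * q k := sum_range_mul_le_sum_range_mul_of_sum_range_le hq hqn hbq
    _ = ∑ k ∈ range n, q k ^ 2 := by simp only [sq]

theorem sum_sq_le_sum_range_sq_of_sum_le {ι : Type*} [Fintype ι] {a : ι → R} {q : ℕ → R}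
    (ha : ∀ i, 0 ≤ a i) (hq : Antitone q) (hq0 : ∀ k, 0 ≤ q k)
    (haq : ∀ T : Finset ι, ∑ i ∈ T, a i ≤ ∑ j ∈ range #T, q j) :
    ∑ i, a i ^ 2 ≤ ∑ k ∈ range (Fintype.card ι), q k ^ 2 := by
  set n := Fintype.card ι
  obtain ⟨σ, hσ⟩ := exists_equiv_fin_antitone a
  -- the decreasing rearrangement of `a`; padding by `0` keeps it antitone since `a ≥ 0`
  set b : ℕ → R := fun k => if h : k < n then a (σ ⟨k, h⟩) else 0 with hb_def
  have hb : Antitone b := antitone_nat_of_succ_le fun k => by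
    by_cases h : k + 1 < n
    · simp only [hb_def, dif_pos h, dif_pos (by omega : k < n)]
      exact hσ (Fin.mk_le_mk.2 k.le_succ)
    · simp only [hb_def, dif_neg h]
      split_ifs
      exacts [ha _, le_rfl]
  have hb_prefix : ∀ k ≤ n, ∑ j ∈ range k, b j ≤ ∑ j ∈ range k, q j := by
    intro k hk
    let T := univ.map ((Fin.castLEEmb hk).trans σ.toEmbedding)
    have hT : #T = k := by simp [T]
    calc ∑ j ∈ range k, b j = ∑ i ∈ T, a i := by
          rw [← Fin.sum_univ_eq_sum_range, sum_map]
          exact sum_congr rfl fun j _ => dif_pos (by omega)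
      _ ≤ ∑ j ∈ range k, q j := hT ▸ haq T
  calc ∑ i, a i ^ 2 = ∑ k ∈ range n, b k ^ 2 := by
        rw [← Equiv.sum_comp σ, ← Fin.sum_univ_eq_sum_range]
        exact sum_congr rfl fun j _ => by
          simp only [hb_def, dif_pos (show (j : ℕ) < n from j.isLt), Fin.eta]
    _ ≤ ∑ k ∈ range n, q k ^ 2 :=
        sum_range_sq_le_of_sum_range_le hb (by simp [hb_def]) hq (hq0 n) hb_prefix

end PartialSummation

theorem sum_range_mul_one_sub_pow {R : Type*} [CommRing R] (p : R) (k : ℕ) :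
    ∑ j ∈ range k, p * (1 - p) ^ j = 1 - (1 - p) ^ k := by
  rw [← mul_sum, ← mul_neg_geom_sum, sub_sub_cancel]

theorem sum_range_sq_mul_one_sub_pow_le {p : ℝ} (hp0 : 0 < p) (hp2 : p < 2) (n : ℕ) :
    ∑ k ∈ range n, (p * (1 - p) ^ k) ^ 2 ≤ p / (2 - p) := by
  have hgeom := mul_neg_geom_sum ((1 - p) ^ 2) n
  have hsum : (2 - p) * ∑ k ∈ range n, (p * (1 - p) ^ k) ^ 2 = p * (1 - ((1 - p) ^ 2) ^ n) := by
    simp_rw [mul_pow, pow_right_comm _ _ 2, ← mul_sum, ← hgeom]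
    ring
  rw [le_div_iff₀ (by linarith), mul_comm, hsum]
  exact mul_le_of_le_one_right hp0.le (sub_le_self _ (by positivity))

section BiasedMeasure

variable {α : Type*} [Fintype α]

def biasedWeight (p : ℝ) (A : Finset α) : ℝ := p ^ #A * (1 - p) ^ (Fintype.card α - #A)

theorem biasedWeight_nonneg {p : ℝ} (hp0 : 0 ≤ p) (hp1 : p ≤ 1) (A : Finset α) :
    0 ≤ biasedWeight p A :=
  mul_nonneg (pow_nonneg hp0 _) (pow_nonneg (sub_nonneg.2 hp1) _)

theorem sum_biasedWeight (p : ℝ) : ∑ A : Finset α, biasedWeight p A = 1 := by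
  simpa [biasedWeight] using sum_pow_mul_eq_add_pow p (1 - p) (univ : Finset α)

variable [DecidableEq α]

theorem sum_biasedWeight_disjoint (p : ℝ) (T : Finset α) :
    ∑ A with Disjoint A T, biasedWeight p A = (1 - p) ^ #T := by
  have hfilter : ({A | Disjoint A T} : Finset (Finset α)) = Tᶜ.powerset := by
    ext A; simp [subset_compl_iff_disjoint_right]
  have hweight : ∀ A ∈ Tᶜ.powerset,
      biasedWeight p A = (1 - p) ^ #T * (p ^ #A * (1 - p) ^ (#Tᶜ - #A)) := by
    intro A hA
    have hAT : #A ≤ #Tᶜ := card_le_card (mem_powerset.1 hA)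
    have hTc : #Tᶜ = Fintype.card α - #T := card_compl T
    have hT : #T ≤ Fintype.card α := card_le_univ T
    rw [biasedWeight, mul_left_comm, ← pow_add]
    congr 3
    omega
  rw [hfilter, sum_congr rfl hweight, ← mul_sum, sum_pow_mul_eq_add_pow, add_sub_cancel, one_pow,
    mul_one]

theorem sum_biasedWeight_not_disjoint (p : ℝ) (T : Finset α) :
    ∑ A with ¬Disjoint A T, biasedWeight p A = 1 - (1 - p) ^ #T := by
  rw [eq_sub_iff_add_eq', ← sum_biasedWeight_disjoint p T, sum_filter_add_sum_filter_not,
    sum_biasedWeight]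

def choiceMass (p : ℝ) (f : Finset α → α) (i : α) : ℝ :=
  ∑ A with A.Nonempty ∧ f A = i, biasedWeight p A

theorem choiceMass_nonneg {p : ℝ} (hp0 : 0 ≤ p) (hp1 : p ≤ 1) (f : Finset α → α) (i : α) :
    0 ≤ choiceMass p f i :=
  sum_nonneg fun A _ => biasedWeight_nonneg hp0 hp1 A

theorem sum_choiceMass_le {p : ℝ} (hp0 : 0 ≤ p) (hp1 : p ≤ 1) {f : Finset α → α}
    (hf : ∀ A : Finset α, A.Nonempty → f A ∈ A) (T : Finset α) :
    ∑ i ∈ T, choiceMass p f i ≤ 1 - (1 - p) ^ #T := by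
  calc ∑ i ∈ T, choiceMass p f i = ∑ A with A.Nonempty ∧ f A ∈ T, biasedWeight p A := by
        rw [← sum_fiberwise_of_maps_to (s := {A | A.Nonempty ∧ f A ∈ T}) (g := f)
          fun A hA => (mem_filter.1 hA).2.2]
        refine sum_congr rfl fun i hi => ?_
        rw [choiceMass, filter_filter]
        congr 1
        ext A
        simp only [mem_filter, mem_univ, true_and]
        constructor
        · rintro ⟨hA, rfl⟩; exact ⟨⟨hA, hi⟩, rfl⟩
        · rintro ⟨⟨hA, -⟩, hfA⟩; exact ⟨hA, hfA⟩
    _ ≤ ∑ A with ¬Disjoint A T, biasedWeight p A := by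
        refine sum_le_sum_of_subset_of_nonneg ?_ fun A _ _ => biasedWeight_nonneg hp0 hp1 A
        intro A
        simp only [mem_filter, mem_univ, true_and]
        rintro ⟨hA, hfA⟩
        exact not_disjoint_iff.2 ⟨f A, hf A hA, hfA⟩
    _ = 1 - (1 - p) ^ #T := sum_biasedWeight_not_disjoint p T

theorem sum_sum_ite_eq_sum_choiceMass_mul (p : ℝ) (f g : Finset α → α) :
    ∑ A, ∑ B, (if A.Nonempty ∧ B.Nonempty ∧ f A = g B then biasedWeight p A * biasedWeight p B
      else 0) = ∑ i, choiceMass p f i * choiceMass p g i := by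
  have inner : ∀ A : Finset α, ∑ B, (if A.Nonempty ∧ B.Nonempty ∧ f A = g B then
      biasedWeight p A * biasedWeight p B else 0) =
      if A.Nonempty then biasedWeight p A * choiceMass p g (f A) else 0 := by
    intro A
    by_cases hA : A.Nonempty
    · simp only [hA, true_and, if_true, choiceMass, mul_sum, sum_filter, eq_comm (a := f A),
        mul_ite, mul_zero]
    · simp [hA]
  calc _ = ∑ A with A.Nonempty, biasedWeight p A * choiceMass p g (f A) := by
        rw [sum_filter]; exact sum_congr rfl fun A _ => inner A
    _ = ∑ i, ∑ A with A.Nonempty ∧ f A = i, biasedWeight p A * choiceMass p g i := by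
        rw [← sum_fiberwise _ f]
        refine sum_congr rfl fun i _ => ?_
        rw [filter_filter]
        exact sum_congr rfl fun A hA => by rw [(mem_filter.1 hA).2.2]
    _ = ∑ i, choiceMass p f i * choiceMass p g i := by simp only [choiceMass, sum_mul]

end BiasedMeasure

theorem sum_choiceMass_sq_le {α : Type*} [Fintype α] [DecidableEq α] {p : ℝ} (hp0 : 0 < p)
    (hp1 : p < 1) {f : Finset α → α} (hf : ∀ A : Finset α, A.Nonempty → f A ∈ A) :
    ∑ i, choiceMass p f i ^ 2 ≤ p / (2 - p) := by
  have hq : Antitone fun k : ℕ => p * (1 - p) ^ k := fun _ _ hkl =>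
    mul_le_mul_of_nonneg_left (pow_le_pow_of_le_one (by linarith) (by linarith) hkl) hp0.le
  calc ∑ i, choiceMass p f i ^ 2 ≤ ∑ k ∈ range (Fintype.card α), (p * (1 - p) ^ k) ^ 2 := by
        refine sum_sq_le_sum_range_sq_of_sum_le (choiceMass_nonneg hp0.le hp1.le f) hq
          (fun k => by positivity) fun T => ?_
        rw [sum_range_mul_one_sub_pow]
        exact sum_choiceMass_le hp0.le hp1.le hf T
    _ ≤ p / (2 - p) := sum_range_sq_mul_one_sub_pow_le hp0 (by linarith) _

/-- For `p ∈ (0,1)` and `(A,B)` drawn from the product of `p`-biased distributions on subsets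
of `[n]`, any strategies `f, g` with `f A ∈ A` and `g B ∈ B` on nonempty sets satisfy:
the probability that `A, B` are nonempty and `f A = g B` is at most `p/(2-p)`. -/
theorem constrained_agreement_upper (n : ℕ) (p : ℝ) (hp : p ∈ Set.Ioo (0 : ℝ) 1)
    (f g : Finset (Fin n) → Fin n)
    (hf : ∀ A : Finset (Fin n), A.Nonempty → f A ∈ A)
    (hg : ∀ B : Finset (Fin n), B.Nonempty → g B ∈ B) :
    ∑ A : Finset (Fin n), ∑ B : Finset (Fin n),
      (if A.Nonempty ∧ B.Nonempty ∧ f A = g B then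
        (p ^ A.card * (1 - p) ^ (n - A.card)) * (p ^ B.card * (1 - p) ^ (n - B.card))
      else 0)
      ≤ p / (2 - p) := by
  obtain ⟨hp0, hp1⟩ := hp
  have hagree := sum_sum_ite_eq_sum_choiceMass_mul p f g
  simp only [biasedWeight, Fintype.card_fin] at hagree
  rw [hagree]
  calc ∑ i, choiceMass p f i * choiceMass p g i
      ≤ ∑ i, (choiceMass p f i ^ 2 + choiceMass p g i ^ 2) / 2 :=
        sum_le_sum fun i _ => by nlinarith [sq_nonneg (choiceMass p f i - choiceMass p g i)]
    _ = (∑ i, choiceMass p f i ^ 2 + ∑ i, choiceMass p g i ^ 2) / 2 := by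
        rw [← sum_div, sum_add_distrib]
    _ ≤ (p / (2 - p) + p / (2 - p)) / 2 := by
        gcongr
        exacts [sum_choiceMass_sq_le hp0 hp1 hf, sum_choiceMass_sq_le hp0 hp1 hg]
    _ = p / (2 - p) := by ring
end

section
/- Let p ∈ (0,1) and D_p as above. For any constrained agreement strategy (f,g) with f(A) ∈ A and g(B) ∈ B for nonempty A, B, the error probability Pr_{(A,B)~D_p}[f(A) ≠ g(B) or A = ∅ or B = ∅] is at least 2(1-p)/(2-p) - 2(1-p)^n. -/
section ConstrainedAgreementAux
open Finset

lemma abel_aux (e w : ℕ → ℝ) (hwa : ∀ i, w (i+1) ≤ w i)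
    (hE : ∀ k, 0 ≤ ∑ i ∈ range k, e i) :
    ∀ n, (∑ i ∈ range n, e i) * w n ≤ ∑ i ∈ range n, e i * w i := by
  intro n
  induction n with
  | zero => simp
  | succ n ih =>
    have hEn1 : 0 ≤ ∑ i ∈ range (n+1), e i := hE (n+1)
    have h1 : (∑ i ∈ range (n+1), e i) * w (n+1) ≤ (∑ i ∈ range (n+1), e i) * w n :=
      mul_le_mul_of_nonneg_left (hwa n) hEn1
    rw [sum_range_succ] at h1 ⊢
    rw [sum_range_succ]
    nlinarith [ih]

lemma abel_nonneg (e w : ℕ → ℝ) (hw0 : ∀ i, 0 ≤ w i) (hwa : ∀ i, w (i+1) ≤ w i)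
    (hE : ∀ k, 0 ≤ ∑ i ∈ range k, e i) (n : ℕ) :
    0 ≤ ∑ i ∈ range n, e i * w i :=
  le_trans (mul_nonneg (hE n) (hw0 n)) (abel_aux e w hwa hE n)

lemma key (n : ℕ) (q : ℝ) (hq0 : 0 < q) (hq1 : q < 1) (a : Fin n → ℝ)
    (ha0 : ∀ i, 0 ≤ a i)
    (hT : ∀ T : Finset (Fin n), ∑ i ∈ T, a i ≤ 1 - q ^ T.card) :
    ∑ i, (a i)^2 ≤ (1 - q) / (1 + q) := by
  classical
  set σ := Tuple.sort a with hσ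
  set w : ℕ → ℝ := fun k => if h : k < n then a (σ ((⟨k, h⟩ : Fin n).rev)) else 0 with hw
  set d : ℕ → ℝ := fun k => (1 - q) * q ^ k with hd
  have hw0 : ∀ i, 0 ≤ w i := by
    intro i; rw [hw]; dsimp only; split
    · exact ha0 _
    · exact le_refl 0
  have hwa : ∀ i, w (i+1) ≤ w i := by
    intro i
    rw [hw]; dsimp only
    by_cases h1 : i + 1 < n
    · have h2 : i < n := by omega
      rw [dif_pos h1, dif_pos h2]
      have hle : ((⟨i+1, h1⟩ : Fin n)).rev ≤ ((⟨i, h2⟩ : Fin n)).rev := by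
        rw [Fin.rev_le_rev]; exact Fin.mk_le_mk.2 (by omega)
      exact Tuple.monotone_sort a hle
    · rw [dif_neg h1]
      split
      · exact ha0 _
      · exact le_refl 0
  have hd0 : ∀ i, 0 ≤ d i := fun i => mul_nonneg (by linarith) (by positivity)
  have hda : ∀ i, d (i+1) ≤ d i := by
    intro i; rw [hd]; dsimp only
    apply mul_le_mul_of_nonneg_left _ (by linarith : (0:ℝ) ≤ 1 - q)
    calc q ^ (i+1) = q ^ i * q := by ring
      _ ≤ q ^ i * 1 := by
          apply mul_le_mul_of_nonneg_left (le_of_lt hq1) (by positivity)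
      _ = q ^ i := by ring
  have hdsum : ∀ k, ∑ i ∈ range k, d i = 1 - q ^ k := by
    intro k
    rw [hd]; dsimp only
    rw [← Finset.mul_sum]
    have := geom_sum_mul q k
    linear_combination (-1 : ℝ) * this
  have hpart : ∀ k, (hk : k ≤ n) → ∃ T : Finset (Fin n), T.card = k ∧ ∑ i ∈ T, a i = ∑ i ∈ range k, w i := by
    intro k hk
    have hinj : Function.Injective (fun j : Fin k => σ ((Fin.castLE hk j).rev)) := by
      intro x y hxy
      exact Fin.castLE_injective hk (Fin.rev_injective (σ.injective hxy))
    refine ⟨Finset.image (fun j : Fin k => σ ((Fin.castLE hk j).rev)) univ, ?_, ?_⟩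
    · rw [Finset.card_image_of_injective _ hinj, card_univ, Fintype.card_fin]
    · rw [Finset.sum_image (fun x _ y _ h => hinj h)]
      rw [← Fin.sum_univ_eq_sum_range]
      apply Finset.sum_congr rfl
      intro j _
      rw [hw]; dsimp only
      rw [dif_pos (lt_of_lt_of_le j.isLt hk)]
      rfl
  have hwsum : ∀ k, ∑ i ∈ range k, w i ≤ 1 - q ^ (min k n) := by
    intro k
    rcases le_or_gt k n with hk | hk
    · obtain ⟨T, hTc, hTs⟩ := hpart k hk
      rw [min_eq_left hk, ← hTs]
      have := hT T
      rwa [hTc] at this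
    · obtain ⟨T, hTc, hTs⟩ := hpart n le_rfl
      have heq : ∑ i ∈ range k, w i = ∑ i ∈ range n, w i := by
        rw [← Finset.sum_range_add_sum_Ico w (le_of_lt hk)]
        have hz : ∑ i ∈ Finset.Ico n k, w i = 0 := by
          apply Finset.sum_eq_zero
          intro i hi
          rw [Finset.mem_Ico] at hi
          rw [hw]; dsimp only
          rw [dif_neg (by omega)]
        rw [hz, add_zero]
      rw [min_eq_right (le_of_lt hk), heq, ← hTs]
      have := hT T
      rwa [hTc] at this
  have hE : ∀ k, 0 ≤ ∑ i ∈ range k, (d i - w i) := by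
    intro k
    rw [Finset.sum_sub_distrib, hdsum]
    have h1 := hwsum k
    have h2 : q ^ k ≤ q ^ (min k n) :=
      pow_le_pow_of_le_one (le_of_lt hq0) (le_of_lt hq1) (min_le_left k n)
    linarith
  have step1 : ∑ i ∈ range n, (w i)^2 ≤ ∑ i ∈ range n, d i * w i := by
    have h := abel_nonneg (fun i => d i - w i) w hw0 hwa hE n
    have hsplit : ∑ i ∈ range n, (d i - w i) * w i
        = ∑ i ∈ range n, d i * w i - ∑ i ∈ range n, (w i)^2 := by
      rw [← Finset.sum_sub_distrib]
      apply Finset.sum_congr rfl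
      intro i _; ring
    rw [hsplit] at h
    linarith
  have step2 : ∑ i ∈ range n, d i * w i ≤ ∑ i ∈ range n, (d i)^2 := by
    have h := abel_nonneg (fun i => d i - w i) d hd0 hda hE n
    have hsplit : ∑ i ∈ range n, (d i - w i) * d i
        = ∑ i ∈ range n, (d i)^2 - ∑ i ∈ range n, d i * w i := by
      rw [← Finset.sum_sub_distrib]
      apply Finset.sum_congr rfl
      intro i _; ring
    rw [hsplit] at h
    linarith
  have step3 : ∑ i ∈ range n, (d i)^2 ≤ (1 - q) / (1 + q) := by
    have hrw : ∑ i ∈ range n, (d i)^2 = (1-q)^2 * ∑ i ∈ range n, (q^2)^i := by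
      rw [Finset.mul_sum]
      apply Finset.sum_congr rfl
      intro i _
      rw [hd]; dsimp only
      ring
    rw [hrw]
    have hg := geom_sum_mul (q^2) n
    set S := ∑ i ∈ range n, (q^2)^i with hS
    have hq2 : (0:ℝ) ≤ (q^2)^n := by positivity
    rw [le_div_iff₀ (by linarith : (0:ℝ) < 1 + q)]
    have h2 : (1-q)^2 * S * (1+q) = (1-q) * (1 - (q^2)^n) := by
      linear_combination (q-1) * hg
    rw [h2]
    nlinarith [mul_nonneg (by linarith : (0:ℝ) ≤ 1-q) hq2]
  have hfinal : ∑ i, (a i)^2 = ∑ i ∈ range n, (w i)^2 := by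
    rw [← Fin.sum_univ_eq_sum_range (fun k => (w k)^2) n]
    have hc := Equiv.sum_comp ((Fin.revPerm).trans σ) (fun i => (a i)^2)
    rw [← hc]
    apply Finset.sum_congr rfl
    intro i _
    rw [hw]; dsimp only
    rw [dif_pos i.isLt]
    simp [Equiv.trans_apply]
  rw [hfinal]
  linarith


lemma sum_powerset_mu (n : ℕ) (p q : ℝ) (hpq : p + q = 1) (S : Finset (Fin n)) :
    ∑ A ∈ S.powerset, p ^ A.card * q ^ (n - A.card) = q ^ (n - S.card) := by
  have hpa := Finset.prod_add (fun _ : Fin n => p) (fun _ : Fin n => q) S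
  rw [prod_const] at hpa
  calc ∑ A ∈ S.powerset, p ^ A.card * q ^ (n - A.card)
      = ∑ A ∈ S.powerset, (p ^ A.card * q ^ (S.card - A.card)) * q ^ (n - S.card) := by
        apply Finset.sum_congr rfl
        intro A hA
        rw [Finset.mem_powerset] at hA
        have h1 : A.card ≤ S.card := Finset.card_le_card hA
        have h2 : S.card ≤ n := by
          simpa using Finset.card_le_univ S
        rw [mul_assoc, ← pow_add]
        congr 2
        omega
    _ = (∑ A ∈ S.powerset, p ^ A.card * q ^ (S.card - A.card)) * q ^ (n - S.card) := by
        rw [Finset.sum_mul]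
    _ = q ^ (n - S.card) := by
        have h2 : ∑ A ∈ S.powerset, p ^ A.card * q ^ (S.card - A.card)
            = ∑ A ∈ S.powerset, (∏ _i ∈ A, p) * ∏ _i ∈ S \ A, q := by
          apply Finset.sum_congr rfl
          intro A hA
          rw [Finset.mem_powerset] at hA
          rw [prod_const, prod_const, Finset.card_sdiff_of_subset hA]
        rw [h2, ← hpa, hpq, one_pow, one_mul]

lemma marginal_constraint (n : ℕ) (p q : ℝ) (hp0 : 0 ≤ p) (hq0 : 0 ≤ q) (hpq : p + q = 1)
    (h : Finset (Fin n) → Fin n) (hh : ∀ A, A.Nonempty → h A ∈ A) (T : Finset (Fin n)) :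
    ∑ i ∈ T, ∑ A : Finset (Fin n), (if A ≠ ∅ ∧ h A = i then p ^ A.card * q ^ (n - A.card) else 0)
      ≤ 1 - q ^ T.card := by
  classical
  rw [Finset.sum_comm]
  have step1 : ∀ A : Finset (Fin n),
      (∑ i ∈ T, if A ≠ ∅ ∧ h A = i then p ^ A.card * q ^ (n - A.card) else 0)
      = if A ≠ ∅ ∧ h A ∈ T then p ^ A.card * q ^ (n - A.card) else 0 := by
    intro A
    by_cases hA : A = ∅
    · simp [hA]
    · simp [hA]
  have step2 : ∀ A : Finset (Fin n),
      (if A ≠ ∅ ∧ h A ∈ T then p ^ A.card * q ^ (n - A.card) else 0)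
      ≤ p ^ A.card * q ^ (n - A.card) - (if A ⊆ Tᶜ then p ^ A.card * q ^ (n - A.card) else 0) := by
    intro A
    have hm0 : 0 ≤ p ^ A.card * q ^ (n - A.card) := by positivity
    by_cases hA : A ≠ ∅ ∧ h A ∈ T
    · rw [if_pos hA]
      have hns : ¬ A ⊆ Tᶜ := by
        intro hsub
        have h1 := hh A (Finset.nonempty_iff_ne_empty.2 hA.1)
        have h2 := hsub h1
        rw [Finset.mem_compl] at h2
        exact h2 hA.2
      rw [if_neg hns]
      linarith
    · rw [if_neg hA]
      split
      · linarith
      · linarith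
  have hTn : T.card ≤ n := by simpa using Finset.card_le_univ T
  calc ∑ A : Finset (Fin n), (∑ i ∈ T, if A ≠ ∅ ∧ h A = i then p ^ A.card * q ^ (n - A.card) else 0)
      = ∑ A : Finset (Fin n), (if A ≠ ∅ ∧ h A ∈ T then p ^ A.card * q ^ (n - A.card) else 0) :=
        Finset.sum_congr rfl (fun A _ => step1 A)
    _ ≤ ∑ A : Finset (Fin n), (p ^ A.card * q ^ (n - A.card)
          - (if A ⊆ Tᶜ then p ^ A.card * q ^ (n - A.card) else 0)) :=
        Finset.sum_le_sum (fun A _ => step2 A)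
    _ = (∑ A : Finset (Fin n), p ^ A.card * q ^ (n - A.card))
          - ∑ A : Finset (Fin n), (if A ⊆ Tᶜ then p ^ A.card * q ^ (n - A.card) else 0) := by
        rw [Finset.sum_sub_distrib]
    _ = 1 - q ^ T.card := by
        have ht : ∑ A : Finset (Fin n), p ^ A.card * q ^ (n - A.card) = 1 := by
          rw [← Finset.powerset_univ, sum_powerset_mu n p q hpq]
          simp
        have hc : ∑ A : Finset (Fin n), (if A ⊆ Tᶜ then p ^ A.card * q ^ (n - A.card) else 0)
            = q ^ T.card := by
          rw [← Finset.sum_filter]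
          have hfe : (univ : Finset (Finset (Fin n))).filter (fun A => A ⊆ Tᶜ) = (Tᶜ).powerset := by
            ext A
            simp [Finset.mem_powerset]
          rw [hfe, sum_powerset_mu n p q hpq]
          congr 1
          rw [Finset.card_compl]
          simp
          omega
        rw [ht, hc]

end ConstrainedAgreementAux

open Finset in
/-- For `p ∈ (0,1)` and `(A,B) ~ D_p` (independent `p`-biased subsets of `[n]`), any
constrained agreement strategy `(f,g)` has error probability
`Pr[f(A) ≠ g(B) or A = ∅ or B = ∅] ≥ 2(1-p)/(2-p) - 2(1-p)^n`. -/
theorem constrained_agreement_lower (n : ℕ) (p : ℝ) (hp : p ∈ Set.Ioo (0 : ℝ) 1)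
    (f g : Finset (Fin n) → Fin n)
    (hf : ∀ A : Finset (Fin n), A.Nonempty → f A ∈ A)
    (hg : ∀ B : Finset (Fin n), B.Nonempty → g B ∈ B) :
    2 * (1 - p) / (2 - p) - 2 * (1 - p) ^ n ≤
      ∑ A : Finset (Fin n), ∑ B : Finset (Fin n),
        (if f A ≠ g B ∨ A = ∅ ∨ B = ∅ then
          (p ^ A.card * (1 - p) ^ (n - A.card)) * (p ^ B.card * (1 - p) ^ (n - B.card))
        else 0) := by
  classical
  obtain ⟨hp0, hp1⟩ := hp
  have hq0 : (0:ℝ) < 1 - p := by linarith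
  have hq1 : (1:ℝ) - p < 1 := by linarith
  have hpq : p + (1 - p) = 1 := by ring
  set a : Fin n → ℝ := fun i => ∑ A : Finset (Fin n),
    (if A ≠ ∅ ∧ f A = i then p ^ A.card * (1-p) ^ (n - A.card) else 0) with ha
  set b : Fin n → ℝ := fun i => ∑ B : Finset (Fin n),
    (if B ≠ ∅ ∧ g B = i then p ^ B.card * (1-p) ^ (n - B.card) else 0) with hb
  have ha0 : ∀ i, 0 ≤ a i := by
    intro i; rw [ha]
    apply Finset.sum_nonneg
    intro A _
    split
    · positivity
    · exact le_refl 0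
  have hb0 : ∀ i, 0 ≤ b i := by
    intro i; rw [hb]
    apply Finset.sum_nonneg
    intro B _
    split
    · positivity
    · exact le_refl 0
  have haT : ∀ T : Finset (Fin n), ∑ i ∈ T, a i ≤ 1 - (1-p) ^ T.card := by
    intro T
    have := marginal_constraint n p (1-p) (le_of_lt hp0) (le_of_lt hq0) hpq f hf T
    simpa [ha] using this
  have hbT : ∀ T : Finset (Fin n), ∑ i ∈ T, b i ≤ 1 - (1-p) ^ T.card := by
    intro T
    have := marginal_constraint n p (1-p) (le_of_lt hp0) (le_of_lt hq0) hpq g hg T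
    simpa [hb] using this
  have hka := key n (1-p) hq0 hq1 a ha0 haT
  have hkb := key n (1-p) hq0 hq1 b hb0 hbT
  have hab : ∑ i, a i * b i ≤ (1 - (1-p)) / (1 + (1-p)) := by
    have h1 : ∑ i, a i * b i ≤ ∑ i, ((a i)^2 + (b i)^2)/2 := by
      apply Finset.sum_le_sum
      intro i _
      nlinarith [sq_nonneg (a i - b i)]
    have h2 : ∑ i, ((a i)^2 + (b i)^2)/2 = ((∑ i, (a i)^2) + ∑ i, (b i)^2)/2 := by
      rw [← Finset.sum_div, Finset.sum_add_distrib]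
    linarith
  -- total mass is 1
  have htot1 : ∑ A : Finset (Fin n), p ^ A.card * (1-p) ^ (n - A.card) = 1 := by
    rw [← Finset.powerset_univ, sum_powerset_mu n p (1-p) hpq]
    simp
  have htot2 : ∑ A : Finset (Fin n), ∑ B : Finset (Fin n),
      (p ^ A.card * (1-p) ^ (n - A.card)) * (p ^ B.card * (1-p) ^ (n - B.card)) = 1 := by
    calc ∑ A : Finset (Fin n), ∑ B : Finset (Fin n),
          (p ^ A.card * (1-p) ^ (n - A.card)) * (p ^ B.card * (1-p) ^ (n - B.card))
        = ∑ A : Finset (Fin n), (p ^ A.card * (1-p) ^ (n - A.card)) *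
            ∑ B : Finset (Fin n), (p ^ B.card * (1-p) ^ (n - B.card)) := by
          apply Finset.sum_congr rfl
          intro A _
          rw [Finset.mul_sum]
      _ = 1 := by rw [htot1]; simpa using htot1
  -- success probability equals ∑ i, a i * b i
  have hsucc : ∑ i, a i * b i = ∑ A : Finset (Fin n), ∑ B : Finset (Fin n),
      (if ¬(f A ≠ g B ∨ A = ∅ ∨ B = ∅) then
        (p ^ A.card * (1-p) ^ (n - A.card)) * (p ^ B.card * (1-p) ^ (n - B.card)) else 0) := by
    have inner : ∀ A B : Finset (Fin n),
        (∑ i : Fin n, (if A ≠ ∅ ∧ f A = i then p ^ A.card * (1-p) ^ (n - A.card) else 0) *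
          (if B ≠ ∅ ∧ g B = i then p ^ B.card * (1-p) ^ (n - B.card) else 0))
        = (if ¬(f A ≠ g B ∨ A = ∅ ∨ B = ∅) then
            (p ^ A.card * (1-p) ^ (n - A.card)) * (p ^ B.card * (1-p) ^ (n - B.card)) else 0) := by
      intro A B
      rw [Finset.sum_eq_single (f A)]
      · by_cases hA : A = ∅
        · simp [hA]
        · by_cases hB : B = ∅
          · simp [hA, hB]
          · by_cases hfg : f A = g B
            · simp [hA, hB, hfg]
            · simp [hA, hB, hfg, Ne.symm hfg]
      · intro i _ hi
        rw [if_neg, zero_mul]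
        rintro ⟨-, hcon⟩
        exact hi hcon.symm
      · intro hmem
        exact absurd (Finset.mem_univ _) hmem
    calc ∑ i, a i * b i
        = ∑ i : Fin n, ∑ A : Finset (Fin n), ∑ B : Finset (Fin n),
            ((if A ≠ ∅ ∧ f A = i then p ^ A.card * (1-p) ^ (n - A.card) else 0) *
             (if B ≠ ∅ ∧ g B = i then p ^ B.card * (1-p) ^ (n - B.card) else 0)) := by
          apply Finset.sum_congr rfl
          intro i _
          rw [ha, hb]
          rw [Finset.sum_mul_sum]
      _ = ∑ A : Finset (Fin n), ∑ B : Finset (Fin n), ∑ i : Fin n,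
            ((if A ≠ ∅ ∧ f A = i then p ^ A.card * (1-p) ^ (n - A.card) else 0) *
             (if B ≠ ∅ ∧ g B = i then p ^ B.card * (1-p) ^ (n - B.card) else 0)) := by
          rw [Finset.sum_comm]
          apply Finset.sum_congr rfl
          intro A _
          rw [Finset.sum_comm]
      _ = _ := Finset.sum_congr rfl (fun A _ => Finset.sum_congr rfl (fun B _ => inner A B))
  -- complementary split
  have hcompl : ∑ A : Finset (Fin n), ∑ B : Finset (Fin n),
        (if f A ≠ g B ∨ A = ∅ ∨ B = ∅ then
          (p ^ A.card * (1 - p) ^ (n - A.card)) * (p ^ B.card * (1 - p) ^ (n - B.card))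
        else 0)
      + ∑ A : Finset (Fin n), ∑ B : Finset (Fin n),
        (if ¬(f A ≠ g B ∨ A = ∅ ∨ B = ∅) then
          (p ^ A.card * (1-p) ^ (n - A.card)) * (p ^ B.card * (1-p) ^ (n - B.card)) else 0)
      = ∑ A : Finset (Fin n), ∑ B : Finset (Fin n),
          (p ^ A.card * (1-p) ^ (n - A.card)) * (p ^ B.card * (1-p) ^ (n - B.card)) := by
    rw [← Finset.sum_add_distrib]
    apply Finset.sum_congr rfl
    intro A _
    rw [← Finset.sum_add_distrib]
    apply Finset.sum_congr rfl
    intro B _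
    by_cases hP : f A ≠ g B ∨ A = ∅ ∨ B = ∅ <;> simp [hP]
  have hfrac : (1 - (1-p)) / (1 + (1-p)) = 1 - 2*(1-p)/(2-p) := by
    have h2p : (2:ℝ) - p ≠ 0 := by linarith
    field_simp
    ring
  have hpn : (0:ℝ) ≤ (1-p)^n := by positivity
  rw [hsucc, hfrac] at hab
  linarith [hcompl, htot2]
end

section
/- Fix g: 2^[n] → [n] with g(B) ∈ B for all nonempty B, and let β_i = Pr_{B}[g(B) = i] where B is a p-biased random subset. Let σ be a permutation with β_{σ⁻¹(1)} ≥ ... ≥ β_{σ⁻¹(n)}, and define f*(A) = argmin_{i∈A} σ(i). Then for every f with f(A) ∈ A for nonempty A, Pr_{(A,B)~D_p}[A,B ≠ ∅ and f(A) = g(B)] ≤ Pr_{(A,B)~D_p}[A,B ≠ ∅ and f*(A) = g(B)]. -/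
/-- Fix `g` with `g B ∈ B` for nonempty `B`, let `β i = Pr_B[B nonempty and g B = i]` over a
`p`-biased random subset `B` of `[n]`, let `σ` be a permutation sorting `β` in decreasing
order, and let `f*` pick the element of `A` minimizing `σ`. Then `f*` maximizes the agreement
probability with `g` among all valid strategies `f`. -/
theorem greedy_best_response (n : ℕ) (p : ℝ) (hp : p ∈ Set.Ioo (0 : ℝ) 1)
    (g : Finset (Fin n) → Fin n)
    (hg : ∀ B : Finset (Fin n), B.Nonempty → g B ∈ B)
    (β : Fin n → ℝ)
    (hβ : ∀ i : Fin n, β i = ∑ B ∈ Finset.univ.filter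
      (fun B : Finset (Fin n) => B.Nonempty ∧ g B = i),
      p ^ B.card * (1 - p) ^ (n - B.card))
    (σ : Equiv.Perm (Fin n))
    (hsort : ∀ k l : Fin n, k ≤ l → β (σ.symm l) ≤ β (σ.symm k))
    (fstar : Finset (Fin n) → Fin n)
    (hfstar : ∀ A : Finset (Fin n), A.Nonempty →
      fstar A ∈ A ∧ ∀ j ∈ A, σ (fstar A) ≤ σ j)
    (f : Finset (Fin n) → Fin n)
    (hf : ∀ A : Finset (Fin n), A.Nonempty → f A ∈ A) :
    ∑ A : Finset (Fin n), ∑ B : Finset (Fin n),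
      (if A.Nonempty ∧ B.Nonempty ∧ f A = g B then
        (p ^ A.card * (1 - p) ^ (n - A.card)) * (p ^ B.card * (1 - p) ^ (n - B.card))
      else 0)
    ≤ ∑ A : Finset (Fin n), ∑ B : Finset (Fin n),
      (if A.Nonempty ∧ B.Nonempty ∧ fstar A = g B then
        (p ^ A.card * (1 - p) ^ (n - A.card)) * (p ^ B.card * (1 - p) ^ (n - B.card))
      else 0) := by
  obtain ⟨hp0, hp1⟩ := hp
  have hw : ∀ A : Finset (Fin n), 0 ≤ p ^ A.card * (1 - p) ^ (n - A.card) :=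
    fun A => mul_nonneg (pow_nonneg hp0.le _) (pow_nonneg (by linarith) _)
  apply Finset.sum_le_sum
  intro A _
  by_cases hA : A.Nonempty
  · have key : ∀ h : Fin n, ∑ B : Finset (Fin n),
        (if A.Nonempty ∧ B.Nonempty ∧ h = g B then
          (p ^ A.card * (1 - p) ^ (n - A.card)) * (p ^ B.card * (1 - p) ^ (n - B.card))
        else 0) = (p ^ A.card * (1 - p) ^ (n - A.card)) * β h := by
      intro h
      rw [hβ, Finset.mul_sum, Finset.sum_filter]
      refine Finset.sum_congr rfl fun B _ => ?_
      by_cases hB : B.Nonempty ∧ g B = h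
      · simp [hA, hB.1, hB.2]
      · rcases Classical.em B.Nonempty with hB1 | hB1
        · have hne : ¬ g B = h := fun hgb => hB ⟨hB1, hgb⟩
          simp only [hA, hB1, true_and]
          rw [if_neg (fun hgb => hne hgb.symm), if_neg hne]
        · simp [hA, hB1, hB]
    rw [key (f A), key (fstar A)]
    refine mul_le_mul_of_nonneg_left ?_ (hw A)
    have h1 := (hfstar A hA).2 (f A) (hf A hA)
    have := hsort (σ (fstar A)) (σ (f A)) h1
    simpa using this
  · simp [hA]
end

section
/- For nonempty A, B ⊆ [n] and a uniformly random permutation π of [n], the probability that argmin_{a∈A} π(a) = argmin_{b∈B} π(b) equals |A ∩ B|/|A ∪ B|. -/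
/-! The minimizer `m` of `π` on `A ∪ B` lies in `A` iff `min π(A) ≤ min π(B)`, so the two minima
agree iff `m ∈ A ∩ B`. Replacing `π` by `π * swap x y` for `x, y ∈ A ∪ B` leaves `π(A ∪ B)`
unchanged and exchanges `x` and `y` as minimizers, so `m` is uniformly distributed on `A ∪ B`. -/

open Finset

theorem Finset.min'_union_mem_left_iff {α : Type*} [LinearOrder α] {s t : Finset α}
    (hs : s.Nonempty) (ht : t.Nonempty) :
    (s ∪ t).min' (hs.mono subset_union_left) ∈ s ↔ s.min' hs ≤ t.min' ht := by
  rw [min'_union hs ht]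
  refine ⟨fun h => (min'_le s _ h).trans inf_le_right, fun h => ?_⟩
  rw [inf_eq_left.2 h]
  exact min'_mem s hs

theorem Finset.min'_union_mem_left_and_right_iff {α : Type*} [LinearOrder α] {s t : Finset α}
    (hs : s.Nonempty) (ht : t.Nonempty) :
    (s ∪ t).min' (hs.mono subset_union_left) ∈ s ∧ (s ∪ t).min' (hs.mono subset_union_left) ∈ t ↔
      s.min' hs = t.min' ht := by
  have hright := min'_union_mem_left_iff ht hs
  simp only [union_comm t s] at hright
  rw [min'_union_mem_left_iff hs ht, hright, le_antisymm_iff]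

theorem Finset.image_swap_of_mem {α : Type*} [DecidableEq α] {s : Finset α} {x y : α}
    (hx : x ∈ s) (hy : y ∈ s) : s.image (Equiv.swap x y) = s := by
  refine eq_of_subset_of_card_le (image_subset_iff.2 fun a ha => ?_)
    (card_image_of_injective _ (Equiv.swap x y).injective).ge
  rw [Equiv.swap_apply_def]
  split_ifs <;> assumption

namespace Equiv.Perm

variable {α : Type*} [LinearOrder α]

noncomputable def argminOn (π : Perm α) (s : Finset α) (hs : s.Nonempty) : α :=
  π.symm ((s.image π).min' (hs.image π))

variable {s : Finset α} (hs : s.Nonempty) (π : Perm α)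

theorem apply_argminOn : π (π.argminOn s hs) = (s.image π).min' (hs.image π) :=
  π.apply_symm_apply _

theorem argminOn_mem_iff {t : Finset α} :
    π.argminOn s hs ∈ t ↔ (s.image π).min' (hs.image π) ∈ t.image π := by
  rw [← apply_argminOn, π.injective.mem_finset_image]

theorem argminOn_mem : π.argminOn s hs ∈ s :=
  (argminOn_mem_iff hs π).2 (min'_mem _ _)

theorem argminOn_mul_of_image_eq {σ : Perm α} (hσ : s.image σ = s) :
    (π * σ).argminOn s hs = σ⁻¹ (π.argminOn s hs) := by
  have himage : s.image ⇑(π * σ) = s.image π := by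
    rw [coe_mul, ← image_image, hσ]
  simp only [argminOn, himage]
  rfl

theorem argminOn_union_mem_inter_iff {t : Finset α} (ht : t.Nonempty) :
    π.argminOn (s ∪ t) (hs.mono subset_union_left) ∈ s ∩ t ↔
      (s.image π).min' (hs.image π) = (t.image π).min' (ht.image π) := by
  rw [mem_inter, argminOn_mem_iff, argminOn_mem_iff]
  simp only [image_union]
  exact min'_union_mem_left_and_right_iff (hs.image π) (ht.image π)

variable [Fintype α] {x y : α}

theorem card_argminOn_eq (hx : x ∈ s) (hy : y ∈ s) :
    #{π : Perm α | π.argminOn s hs = x} = #{π : Perm α | π.argminOn s hs = y} := by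
  have hswap := image_swap_of_mem hx hy
  refine card_nbij' (· * swap x y) (· * swap x y) (fun π hπ => ?_) (fun π hπ => ?_)
    (fun π _ => mul_swap_mul_self x y π) (fun π _ => mul_swap_mul_self x y π)
  · simp only [mem_coe, mem_filter, mem_univ, true_and] at hπ ⊢
    rw [argminOn_mul_of_image_eq hs π hswap, swap_inv, hπ, swap_apply_left]
  · simp only [mem_coe, mem_filter, mem_univ, true_and] at hπ ⊢
    rw [argminOn_mul_of_image_eq hs π hswap, swap_inv, hπ, swap_apply_right]

theorem card_argminOn_mem {t : Finset α} (hts : t ⊆ s) (hx : x ∈ s) :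
    #{π : Perm α | π.argminOn s hs ∈ t} = #t * #{π : Perm α | π.argminOn s hs = x} := by
  rw [← sum_card_fiberwise_eq_card_filter,
    sum_const_nat fun y hy => card_argminOn_eq hs (hts hy) hx]

theorem card_perm_eq_mul_card_argminOn (hx : x ∈ s) :
    Fintype.card (Perm α) = #s * #{π : Perm α | π.argminOn s hs = x} := by
  rw [← card_argminOn_mem hs subset_rfl hx, filter_true_of_mem fun π _ => argminOn_mem hs π,
    card_univ]

end Equiv.Perm

/-- For nonempty `A, B ⊆ [n]` and a uniformly random permutation `π` of `[n]`, the probability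
that the `π`-minimizer of `A` equals the `π`-minimizer of `B` is `|A ∩ B| / |A ∪ B|`. -/
theorem minhash_agreement (n : ℕ) (A B : Finset (Fin n)) (hA : A.Nonempty) (hB : B.Nonempty) :
    ((Finset.univ.filter (fun π : Equiv.Perm (Fin n) =>
        (A.image π).min' (hA.image π) = (B.image π).min' (hB.image π))).card : ℝ)
      / (Fintype.card (Equiv.Perm (Fin n)) : ℝ)
    = ((A ∩ B).card : ℝ) / (A ∪ B).card := by
  have hU : (A ∪ B).Nonempty := hA.mono subset_union_left
  have hx := Equiv.Perm.argminOn_mem hU 1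
  have hfiber :
      (#{π : Equiv.Perm (Fin n) | π.argminOn (A ∪ B) hU = Equiv.Perm.argminOn 1 (A ∪ B) hU} : ℝ)
        ≠ 0 :=
    Nat.cast_ne_zero.2 (card_ne_zero.2 ⟨1, mem_filter.2 ⟨mem_univ _, rfl⟩⟩)
  rw [filter_congr fun π _ => (Equiv.Perm.argminOn_union_mem_inter_iff hA π hB).symm,
    Equiv.Perm.card_argminOn_mem hU inter_subset_union hx,
    Equiv.Perm.card_perm_eq_mul_card_argminOn hU hx,
    Nat.cast_mul, Nat.cast_mul, mul_div_mul_right _ _ hfiber]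
end
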